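/- A synaptic algebra A is commutative (i.e., ab = ba for all a,b ∈ A) if and only if its projection lattice P is a Boolean algebra, i.e., if and only if the lattice P is distributive. -/
import Mathlib


/-- For subsets `A, B` of a ring `R`, the commutant of `B` within `A`:
`C(B) = {x ∈ A : x b = b x for all b ∈ B}`. -/
def SynComm {R : Type*} [Ring R] (A : Set R) (B : Set R) : Set R :=
  {x | x ∈ A ∧ ∀ b ∈ B, x * b = b * x}

/-- A synaptic algebra: a real vector subspace `A` of a real linear associative
algebra `R` with unity, satisfying axioms SA1–SA8 of Foulis.  The partial order
is recorded as a relation `le` on `R`, whose axioms are imposed on elements of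
`A`; `1` is an order unit, the order is archimedean, and the norm convergence
occurring in SA8 is expressed via the order-unit characterization
`‖a‖ ≤ ε ↔ -ε•1 ≤ a ≤ ε•1`. -/
structure SynapticAlgebra (R : Type*) [Ring R] [Algebra ℝ R] where
  A : Set R
  zero_mem : (0 : R) ∈ A
  one_mem : (1 : R) ∈ A
  add_mem : ∀ {a b : R}, a ∈ A → b ∈ A → a + b ∈ A
  smul_mem : ∀ (r : ℝ) {a : R}, a ∈ A → r • a ∈ A
  /-- the partial order on `A` (SA1) -/
  le : R → R → Prop
  le_refl : ∀ a ∈ A, le a a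
  le_trans : ∀ a ∈ A, ∀ b ∈ A, ∀ c ∈ A, le a b → le b c → le a c
  le_antisymm : ∀ a ∈ A, ∀ b ∈ A, le a b → le b a → a = b
  add_le_add : ∀ a ∈ A, ∀ b ∈ A, ∀ c ∈ A, le a b → le (a + c) (b + c)
  smul_nonneg : ∀ (r : ℝ), 0 ≤ r → ∀ a ∈ A, le 0 a → le 0 (r • a)
  /-- SA1: the ordered vector space `A` is archimedean -/
  archimedean : ∀ a ∈ A, ∀ b ∈ A, (∀ n : ℕ, le (n • a) b) → le a 0
  /-- SA1: `1` is an order unit for `A` -/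
  orderUnit : ∀ a ∈ A, ∃ r : ℝ, le a (r • (1 : R))
  /-- SA2 (together with closure of `A` under squaring) -/
  sq_mem : ∀ a ∈ A, a * a ∈ A
  sq_nonneg : ∀ a ∈ A, le 0 (a * a)
  /-- SA3 -/
  SA3 : ∀ a ∈ A, ∀ b ∈ A, le 0 a → le 0 b → le 0 (a * b * a)
  /-- SA4 -/
  SA4 : ∀ a ∈ A, ∀ b ∈ A, le 0 b → a * b * a = 0 → a * b = 0 ∧ b * a = 0
  /-- SA5: positive elements have square roots in `CC(a)` -/
  SA5 : ∀ a ∈ A, le 0 a →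
    ∃ b ∈ SynComm A (SynComm A {a}), le 0 b ∧ b * b = a
  /-- SA6: existence of carrier projections -/
  SA6 : ∀ a ∈ A, ∃ p ∈ A, p * p = p ∧ ∀ b ∈ A, (a * b = 0 ↔ p * b = 0)
  /-- SA7: elements above `1` are invertible -/
  SA7 : ∀ a ∈ A, le 1 a → ∃ b ∈ A, a * b = 1 ∧ b * a = 1
  /-- SA8: commutants are closed under norm limits of ascending commuting sequences -/
  SA8 : ∀ a ∈ A, ∀ b ∈ A, ∀ f : ℕ → R, (∀ n, f n ∈ A) →
    (∀ n, f n * b = b * f n) → (∀ n m, f n * f m = f m * f n) →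
    (∀ n, le (f n) (f (n + 1))) →
    (∀ ε : ℝ, 0 < ε → ∃ N : ℕ, ∀ n ≥ N,
        le (a - f n) (ε • (1 : R)) ∧ le ((-ε) • (1 : R)) (a - f n)) →
    a * b = b * a
  /-- non-degeneracy: `0 ≠ 1` -/
  nondegenerate : (0 : R) ≠ 1

namespace SynapticAlgebra

variable {R : Type*} [Ring R] [Algebra ℝ R] (S : SynapticAlgebra R)

/-- The set `P` of projections of the synaptic algebra. -/
def Proj : Set R := {p | p ∈ S.A ∧ p * p = p}

/-- A symmetry: an element `s ∈ A` with `s² = 1`. -/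
def IsSymmetry (s : R) : Prop := s ∈ S.A ∧ s * s = 1

/-- Projections `e` and `f` are exchanged by a symmetry. -/
def ExchBySym (e f : R) : Prop := ∃ s, S.IsSymmetry s ∧ s * e * s = f

/-- `p ∼ q`: equivalence of projections induced by finite sequences of
symmetries, i.e. `q = sₙ ⋯ s₁ p s₁ ⋯ sₙ`. -/
def Equiv (p q : R) : Prop := Relation.ReflTransGen S.ExchBySym p q

/-- `p` and `q` are related: they have nonzero equivalent subprojections. -/
def Related (p q : R) : Prop :=
  ∃ p₁ ∈ S.Proj, ∃ q₁ ∈ S.Proj, p₁ ≠ 0 ∧ q₁ ≠ 0 ∧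
    S.le p₁ p ∧ S.le q₁ q ∧ S.Equiv p₁ q₁

/-- `p ≼ q`: `p` is equivalent to a subprojection of `q`. -/
def SubEquiv (p q : R) : Prop := ∃ q₁ ∈ S.Proj, S.le q₁ q ∧ S.Equiv p q₁

/-- `c` commutes with every element of `A` (so a projection `c` with this
property is a central projection, `c ∈ P ∩ C(A)`). -/
def IsCentral (c : R) : Prop := ∀ a ∈ S.A, c * a = a * c

/-- `m = e ∧ f`, the infimum of `e` and `f` in the projection lattice `P`. -/
def IsMeet (e f m : R) : Prop :=
  m ∈ S.Proj ∧ S.le m e ∧ S.le m f ∧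
    ∀ r ∈ S.Proj, S.le r e → S.le r f → S.le r m

/-- `j = e ∨ f`, the supremum of `e` and `f` in the projection lattice `P`. -/
def IsJoin (e f j : R) : Prop :=
  j ∈ S.Proj ∧ S.le e j ∧ S.le f j ∧
    ∀ r ∈ S.Proj, S.le e r → S.le f r → S.le j r

/-- `m = ⋁ Q`, the supremum of the set `Q` in the projection lattice `P`. -/
def IsSupOf (Q : Set R) (m : R) : Prop :=
  m ∈ S.Proj ∧ (∀ q ∈ Q, S.le q m) ∧
    ∀ b ∈ S.Proj, (∀ q ∈ Q, S.le q b) → S.le m b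

/-- `m = ⋀ Q`, the infimum of the set `Q` in the projection lattice `P`. -/
def IsInfOf (Q : Set R) (m : R) : Prop :=
  m ∈ S.Proj ∧ (∀ q ∈ Q, S.le m q) ∧
    ∀ b ∈ S.Proj, (∀ q ∈ Q, S.le b q) → S.le b m

/-- The projection lattice `P` is a complete lattice: every subset of `P`
has a supremum and an infimum in `P`. -/
def ProjComplete : Prop :=
  ∀ Q ⊆ S.Proj, (∃ m, S.IsSupOf Q m) ∧ (∃ m, S.IsInfOf Q m)

/-- The projection lattice `P` is centrally orthocomplete: every family of
projections dominated by a pairwise orthogonal family of central projections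
has a supremum in `P`. -/
def CentrallyOrthocomplete : Prop :=
  ∀ Q ⊆ S.Proj, ∀ c : R → R,
    (∀ q ∈ Q, c q ∈ S.Proj ∧ S.IsCentral (c q) ∧ S.le q (c q)) →
    (∀ q ∈ Q, ∀ q' ∈ Q, q ≠ q' → c q * c q' = 0) →
    ∃ m, S.IsSupOf Q m

/-- `c = γ p`: `c` is the central cover of `p`, the smallest central
projection dominating `p`. -/
def IsCentralCover (p c : R) : Prop :=
  c ∈ S.Proj ∧ S.IsCentral c ∧ S.le p c ∧
    ∀ d ∈ S.Proj, S.IsCentral d → S.le p d → S.le c d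

/-- `x = φ_e(f) = e ∧ (e^⊥ ∨ f)`, the Sasaki projection of `f` determined
by `e`, in the projection lattice `P` (where `e^⊥ = 1 - e`). -/
def IsSasaki (e f x : R) : Prop :=
  ∃ j, S.IsJoin (1 - e) f j ∧ S.IsMeet e j x

/-- Mackey compatibility of projections `p` and `q` in the OML `P`:
there are pairwise orthogonal projections `p₁, q₁, d` with `p = p₁ ∨ d = p₁ + d`
and `q = q₁ ∨ d = q₁ + d` (orthogonal projections satisfy `pq = qp = 0` and
their join is their sum). -/
def Compatible (p q : R) : Prop :=
  ∃ p₁ ∈ S.Proj, ∃ q₁ ∈ S.Proj, ∃ d ∈ S.Proj,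
    p₁ * q₁ = 0 ∧ q₁ * p₁ = 0 ∧ p₁ * d = 0 ∧ d * p₁ = 0 ∧
    q₁ * d = 0 ∧ d * q₁ = 0 ∧ p = p₁ + d ∧ q = q₁ + d

end SynapticAlgebra
namespace SynapticAlgebra

variable {R : Type*} [Ring R] [Algebra ℝ R] (S : SynapticAlgebra R)

/-! ### Membership lemmas -/

lemma neg_mem {a : R} (ha : a ∈ S.A) : -a ∈ S.A := by
  have := S.smul_mem (-1 : ℝ) ha; rwa [neg_one_smul] at this

lemma sub_mem' {a b : R} (ha : a ∈ S.A) (hb : b ∈ S.A) : a - b ∈ S.A := by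
  have := S.add_mem ha (S.neg_mem hb); rwa [← sub_eq_add_neg] at this

lemma smul_one_mem (r : ℝ) : (r • (1:R)) ∈ S.A := S.smul_mem r S.one_mem

lemma jord_mem {a b : R} (ha : a ∈ S.A) (hb : b ∈ S.A) : a*b + b*a ∈ S.A := by
  have h : a*b + b*a = (a+b)*(a+b) - a*a - b*b := by noncomm_ring
  rw [h]
  exact S.sub_mem' (S.sub_mem' (S.sq_mem _ (S.add_mem ha hb)) (S.sq_mem _ ha)) (S.sq_mem _ hb)

lemma half_double (x : R) : (1/2 : ℝ) • (x + x) = x := by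
  rw [← two_smul ℝ x, smul_smul]; norm_num

lemma comm_mul_mem {a b : R} (ha : a ∈ S.A) (hb : b ∈ S.A) (h : a*b = b*a) : a*b ∈ S.A := by
  have h2 : a*b = (1/2 : ℝ) • (a*b + b*a) := by rw [← h, half_double]
  rw [h2]; exact S.smul_mem _ (S.jord_mem ha hb)

lemma quad_mem {a b : R} (ha : a ∈ S.A) (hb : b ∈ S.A) : a*b*a ∈ S.A := by
  have h : a*b*a = (1/2 : ℝ) • ((a*(a*b+b*a) + (a*b+b*a)*a) - ((a*a)*b + b*(a*a))) := by
    have : (a*(a*b+b*a) + (a*b+b*a)*a) - ((a*a)*b + b*(a*a)) = a*b*a + a*b*a := by noncomm_ring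
    rw [this, half_double]
  rw [h]
  exact S.smul_mem _ (S.sub_mem' (S.jord_mem ha (S.jord_mem ha hb))
    (S.jord_mem (S.sq_mem _ ha) hb))

/-! ### Order lemmas -/

lemma sub_nonneg_of_le {a b : R} (ha : a ∈ S.A) (hb : b ∈ S.A) (h : S.le a b) :
    S.le 0 (b - a) := by
  have := S.add_le_add a ha b hb (-a) (S.neg_mem ha) h
  simpa [sub_eq_add_neg] using this

lemma le_of_sub_nonneg {a b : R} (ha : a ∈ S.A) (hb : b ∈ S.A) (h : S.le 0 (b - a)) :
    S.le a b := by
  have := S.add_le_add 0 S.zero_mem (b - a) (S.sub_mem' hb ha) a ha h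
  simpa using this

lemma le_shift {a b c d : R} (ha : a ∈ S.A) (hb : b ∈ S.A) (hc : c ∈ S.A) (hd : d ∈ S.A)
    (h : S.le a b) (e : b - a = d - c) : S.le c d := by
  apply S.le_of_sub_nonneg hc hd
  rw [← e]; exact S.sub_nonneg_of_le ha hb h

lemma add_nonneg' {a b : R} (ha : a ∈ S.A) (hb : b ∈ S.A) (h1 : S.le 0 a) (h2 : S.le 0 b) :
    S.le 0 (a + b) := by
  have h3 : S.le b (a + b) := by
    have := S.add_le_add 0 S.zero_mem a ha b hb h1; simpa [add_comm] using this
  exact S.le_trans 0 S.zero_mem b hb (a+b) (S.add_mem ha hb) h2 h3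

lemma one_nonneg : S.le 0 (1 : R) := by
  have := S.sq_nonneg 1 S.one_mem; simpa using this

lemma smul_one_nonneg {r : ℝ} (hr : 0 ≤ r) : S.le 0 (r • (1:R)) :=
  S.smul_nonneg r hr 1 S.one_mem S.one_nonneg

lemma proj_nonneg {p : R} (hp : p ∈ S.Proj) : S.le 0 p := by
  have := S.sq_nonneg p hp.1; rwa [hp.2] at this

lemma one_proj : (1:R) ∈ S.Proj := ⟨S.one_mem, by simp⟩

lemma compl_proj {p : R} (hp : p ∈ S.Proj) : 1 - p ∈ S.Proj := by
  refine ⟨S.sub_mem' S.one_mem hp.1, ?_⟩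
  have : (1-p)*(1-p) = 1 - p - p + p*p := by noncomm_ring
  rw [this, hp.2]; abel

lemma proj_le_one {p : R} (hp : p ∈ S.Proj) : S.le p 1 := by
  apply S.le_of_sub_nonneg hp.1 S.one_mem
  exact S.proj_nonneg (S.compl_proj hp)

lemma sq_eq_zero {a : R} (ha : a ∈ S.A) (h : a*a = 0) : a = 0 := by
  have h4 := S.SA4 a ha 1 S.one_mem S.one_nonneg (by simpa using h)
  simpa using h4.1

lemma smul_one_mono {r s : ℝ} (h : r ≤ s) : S.le (r • (1:R)) (s • (1:R)) := by
  apply S.le_of_sub_nonneg (S.smul_one_mem r) (S.smul_one_mem s)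
  rw [← sub_smul]
  exact S.smul_one_nonneg (by linarith)

end SynapticAlgebra
namespace SynapticAlgebra

variable {R : Type*} [Ring R] [Algebra ℝ R] (S : SynapticAlgebra R)

lemma sqrt {a : R} (ha : a ∈ S.A) (h0 : S.le 0 a) :
    ∃ r, r ∈ S.A ∧ S.le 0 r ∧ r*r = a ∧ ∀ y ∈ S.A, y*a = a*y → r*y = y*r := by
  obtain ⟨b, hbCC, hb0, hbb⟩ := S.SA5 a ha h0
  refine ⟨b, hbCC.1, hb0, hbb, fun y hy hya => ?_⟩
  exact hbCC.2 y ⟨hy, fun c hc => by rw [Set.mem_singleton_iff] at hc; subst hc; exact hya⟩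

lemma mul_nonneg_comm {a b : R} (ha : a ∈ S.A) (hb : b ∈ S.A)
    (h0a : S.le 0 a) (h0b : S.le 0 b) (hc : a*b = b*a) : S.le 0 (a*b) := by
  obtain ⟨r, hrA, hr0, hrr, hrc⟩ := S.sqrt ha h0a
  have hrb : r*b = b*r := hrc b hb hc.symm
  have key : a*b = r*b*r := by rw [mul_assoc, ← hrb, ← mul_assoc, hrr]
  rw [key]; exact S.SA3 r hrA b hb hr0 h0b

lemma conj_mono {p a b : R} (hp : p ∈ S.A) (hp0 : S.le 0 p) (ha : a ∈ S.A) (hb : b ∈ S.A)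
    (h : S.le a b) : S.le (p*a*p) (p*b*p) := by
  apply S.le_of_sub_nonneg (S.quad_mem hp ha) (S.quad_mem hp hb)
  have e : p*b*p - p*a*p = p*(b-a)*p := by noncomm_ring
  rw [e]
  exact S.SA3 p hp (b-a) (S.sub_mem' hb ha) hp0 (S.sub_nonneg_of_le ha hb h)

lemma proj_le_of_mul {p q : R} (hp : p ∈ S.Proj) (hq : q ∈ S.Proj)
    (h1 : p*q = p) (h2 : q*p = p) : S.le p q := by
  apply S.le_of_sub_nonneg hp.1 hq.1
  have key : q - p = (1-p)*q*(1-p) := by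
    have e : (1-p)*q*(1-p) = q - p*q - q*p + p*q*p := by noncomm_ring
    rw [e, h1, h2, hp.2]; abel
  rw [key]
  exact S.SA3 (1-p) (S.sub_mem' S.one_mem hp.1) q hq.1
    (S.proj_nonneg (S.compl_proj hp)) (S.proj_nonneg hq)

lemma mul_of_proj_le {p q : R} (hp : p ∈ S.Proj) (hq : q ∈ S.Proj) (h : S.le p q) :
    p*q = p ∧ q*p = p := by
  have h1q : S.le (1-q) (1-p) :=
    S.le_shift hp.1 hq.1 (S.sub_mem' S.one_mem hq.1) (S.sub_mem' S.one_mem hp.1) h (by abel)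
  have hx0 : S.le 0 (p*(1-q)*p) :=
    S.SA3 p hp.1 (1-q) (S.sub_mem' S.one_mem hq.1) (S.proj_nonneg hp)
      (S.proj_nonneg (S.compl_proj hq))
  have hx1 : S.le (p*(1-q)*p) (p*(1-p)*p) :=
    S.conj_mono hp.1 (S.proj_nonneg hp) (S.sub_mem' S.one_mem hq.1)
      (S.sub_mem' S.one_mem hp.1) h1q
  have hzero : p*(1-p)*p = 0 := by
    have : p*(1-p)*p = (p - p*p)*p := by noncomm_ring
    rw [this, hp.2, sub_self, zero_mul]
  have hPQ : p*(1-q)*p = 0 := by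
    apply S.le_antisymm _ (S.quad_mem hp.1 (S.sub_mem' S.one_mem hq.1)) 0 S.zero_mem _ hx0
    rw [← hzero]; exact hx1
  have h4 := S.SA4 p hp.1 (1-q) (S.sub_mem' S.one_mem hq.1)
    (S.proj_nonneg (S.compl_proj hq)) hPQ
  constructor
  · have := h4.1; rw [mul_sub, mul_one, sub_eq_zero] at this; exact this.symm
  · have := h4.2; rw [sub_mul, one_mul, sub_eq_zero] at this; exact this.symm

lemma proj_le_iff {p q : R} (hp : p ∈ S.Proj) (hq : q ∈ S.Proj) :
    S.le p q ↔ (p*q = p ∧ q*p = p) :=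
  ⟨fun h => S.mul_of_proj_le hp hq h, fun h => S.proj_le_of_mul hp hq h.1 h.2⟩

/-! ### Carrier projections -/

lemma carrier {x : R} (hx : x ∈ S.A) (h0 : S.le 0 x) :
    ∃ e, e ∈ S.Proj ∧ (∀ b ∈ S.A, (x*b = 0 ↔ e*b = 0)) ∧ x*e = x ∧ e*x = x := by
  obtain ⟨e, heA, hee, hiff⟩ := S.SA6 x hx
  have he1e : e*(1-e) = 0 := by rw [mul_sub, mul_one, hee, sub_self]
  have hx1e : x*(1-e) = 0 := (hiff (1-e) (S.sub_mem' S.one_mem heA)).mpr he1e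
  have hxe : x*e = x := by rw [mul_sub, mul_one, sub_eq_zero] at hx1e; exact hx1e.symm
  have h1ex : (1-e)*x*(1-e) = 0 := by rw [mul_assoc, hx1e, mul_zero]
  have h4 := S.SA4 (1-e) (S.sub_mem' S.one_mem heA) x hx h0 h1ex
  have hex : e*x = x := by
    have := h4.1; rw [sub_mul, one_mul, sub_eq_zero] at this; exact this.symm
  exact ⟨e, ⟨heA, hee⟩, hiff, hxe, hex⟩

end SynapticAlgebra
namespace SynapticAlgebra

variable {R : Type*} [Ring R] [Algebra ℝ R] (S : SynapticAlgebra R)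


lemma id_sq_diff (z : R) : 1 - z*z = (1-z)*(1+z) := by noncomm_ring
lemma id_plus (g : R) : (1+g)*(1+g) + (1 - g*g) = (1+g) + (1+g) := by noncomm_ring
lemma id_minus (g : R) : (1-g)*(1-g) + (1 - g*g) = (1-g) + (1-g) := by noncomm_ring

lemma nonneg_of_forall_eps {x : R} (hx : x ∈ S.A)
    (h : ∀ ε : ℝ, 0 < ε → S.le 0 (x + ε • (1:R))) : S.le 0 x := by
  have harch : S.le (-x) 0 := by
    apply S.archimedean (-x) (S.neg_mem hx) 1 S.one_mem
    intro n
    match n with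
    | 0 => simpa using S.one_nonneg
    | Nat.succ m =>
      have hm0 : ((m:ℝ)+1) ≠ 0 := by positivity
      have hpos : (0:ℝ) < 1/(m+1) := by positivity
      have h1 := h (1/(m+1)) hpos
      have h2 := S.smul_nonneg ((m:ℝ)+1) (by positivity) _
        (S.add_mem hx (S.smul_one_mem _)) h1
      have e1 : ((m:ℝ)+1) • (x + (1/(m+1:ℝ)) • (1:R)) = ((m:ℝ)+1) • x + 1 := by
        rw [smul_add, smul_smul, mul_one_div, div_self hm0, one_smul]
      rw [e1] at h2
      have h3 : S.le (((m:ℝ)+1) • (-x)) 1 := by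
        apply S.le_shift S.zero_mem (S.add_mem (S.smul_mem _ hx) S.one_mem)
          (S.smul_mem _ (S.neg_mem hx)) S.one_mem h2
        rw [smul_neg]; abel
      have e2 : (Nat.succ m : ℕ) • (-x) = ((m:ℝ)+1) • (-x) := by
        rw [← Nat.cast_smul_eq_nsmul ℝ]
        norm_num
      rwa [e2]
  apply S.le_shift (S.neg_mem hx) S.zero_mem S.zero_mem hx harch
  abel

lemma inv_nonneg_aux {d h : R} (hd : d ∈ S.A) (hh : h ∈ S.A) (hd0 : S.le 0 d)
    (h1 : d*h = 1) (h2 : h*d = 1) : S.le 0 h := by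
  obtain ⟨r, hrA, hr0, hrr, hrc⟩ := S.sqrt hd hd0
  have hrh : r*h = h*r := hrc h hh (by rw [h1, h2])
  have key : h = (r*h)*(r*h) := by
    have e1 : h = h*d*h := by rw [h2, one_mul]
    calc h = h*d*h := e1
    _ = h*(r*r)*h := by rw [hrr]
    _ = (h*r)*(r*h) := by noncomm_ring
    _ = (r*h)*(r*h) := by rw [hrh]
  rw [key]
  exact S.sq_nonneg _ (S.comm_mul_mem hrA hh hrh)

lemma abs_ge {c d : R} (hc : c ∈ S.A) (hd : d ∈ S.A) (hd0 : S.le 0 d)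
    (hdd : d*d = c*c) (hdc : d*c = c*d) : S.le 0 (d + c) ∧ S.le 0 (d - c) := by
  have key : ∀ ε : ℝ, 0 < ε → S.le 0 ((d + c) + ε • (1:R)) ∧ S.le 0 ((d - c) + ε • (1:R)) := by
    intro ε hε
    have hdεA : d + ε • (1:R) ∈ S.A := S.add_mem hd (S.smul_one_mem ε)
    have hdε0 : S.le 0 (d + ε • (1:R)) :=
      S.add_nonneg' hd (S.smul_one_mem ε) hd0 (S.smul_one_nonneg hε.le)
    have hone : S.le 1 ((1/ε) • (d + ε • (1:R))) := by
      apply S.le_of_sub_nonneg S.one_mem (S.smul_mem _ hdεA)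
      have e : (1/ε) • (d + ε • (1:R)) - 1 = (1/ε) • d := by
        rw [smul_add, smul_smul, one_div, inv_mul_cancel₀ hε.ne', one_smul]
        abel
      rw [e]
      exact S.smul_nonneg _ (by positivity) d hd hd0
    obtain ⟨b, hbA, hb1, hb2⟩ := S.SA7 _ (S.smul_mem (1/ε) hdεA) hone
    have hhA : (1/ε) • b ∈ S.A := S.smul_mem _ hbA
    have hinv1 : (d + ε • (1:R)) * ((1/ε) • b) = 1 := by
      rw [mul_smul_comm]
      calc (1/ε) • ((d + ε • (1:R)) * b) = ((1/ε) • (d + ε • (1:R))) * b := by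
            rw [smul_mul_assoc]
      _ = 1 := hb1
    have hinv2 : ((1/ε) • b) * (d + ε • (1:R)) = 1 := by
      rw [smul_mul_assoc]
      calc (1/ε) • (b * (d + ε • (1:R))) = b * ((1/ε) • (d + ε • (1:R))) := by
            rw [mul_smul_comm]
      _ = 1 := hb2
    have hh0 : S.le 0 ((1/ε) • b) := S.inv_nonneg_aux hdεA hhA hdε0 hinv1 hinv2
    have hcdε : c * (d + ε • (1:R)) = (d + ε • (1:R)) * c := by
      rw [mul_add, add_mul, ← hdc, mul_smul_comm, smul_mul_assoc, mul_one, one_mul]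
    have hddε : d * (d + ε • (1:R)) = (d + ε • (1:R)) * d := by
      rw [mul_add, add_mul, mul_smul_comm, smul_mul_assoc, mul_one, one_mul]
    have hcomm : ∀ y : R, y * (d + ε • (1:R)) = (d + ε • (1:R)) * y →
        y * ((1/ε) • b) = ((1/ε) • b) * y := by
      intro y hy
      calc y * ((1/ε) • b) = 1 * (y * ((1/ε) • b)) := by rw [one_mul]
      _ = (((1/ε) • b) * (d + ε • (1:R))) * (y * ((1/ε) • b)) := by rw [hinv2]
      _ = ((1/ε) • b) * ((d + ε • (1:R)) * y) * ((1/ε) • b) := by noncomm_ring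
      _ = ((1/ε) • b) * (y * (d + ε • (1:R))) * ((1/ε) • b) := by rw [hy]
      _ = (((1/ε) • b) * y) * ((d + ε • (1:R)) * ((1/ε) • b)) := by noncomm_ring
      _ = ((1/ε) • b) * y := by rw [hinv1, mul_one]
    have hch : c * ((1/ε) • b) = ((1/ε) • b) * c := hcomm c hcdε
    have hdh : d * ((1/ε) • b) = ((1/ε) • b) * d := hcomm d hddε
    have hzA : d * ((1/ε) • b) ∈ S.A := S.comm_mul_mem hd hhA hdh
    have hz0 : S.le 0 (d * ((1/ε) • b)) := S.mul_nonneg_comm hd hhA hd0 hh0 hdh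
    have hz1 : S.le (d * ((1/ε) • b)) 1 := by
      apply S.le_of_sub_nonneg hzA S.one_mem
      have hsplit := hinv1
      rw [add_mul, smul_mul_assoc, one_mul] at hsplit
      have e : 1 - d * ((1/ε) • b) = ε • ((1/ε) • b) := by
        rw [← hsplit]; abel
      rw [e]
      exact S.smul_nonneg ε hε.le _ hhA hh0
    have hgA : c * ((1/ε) • b) ∈ S.A := S.comm_mul_mem hc hhA hch
    have hgg : (c * ((1/ε) • b)) * (c * ((1/ε) • b)) = (d * ((1/ε) • b)) * (d * ((1/ε) • b)) := by
      calc (c * ((1/ε) • b)) * (c * ((1/ε) • b)) = c*(((1/ε) • b)*c)*((1/ε) • b) := by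
            noncomm_ring
      _ = c*(c*((1/ε) • b))*((1/ε) • b) := by rw [← hch]
      _ = (c*c)*(((1/ε) • b)*((1/ε) • b)) := by noncomm_ring
      _ = (d*d)*(((1/ε) • b)*((1/ε) • b)) := by rw [hdd]
      _ = d*(d*((1/ε) • b))*((1/ε) • b) := by noncomm_ring
      _ = d*(((1/ε) • b)*d)*((1/ε) • b) := by rw [hdh]
      _ = (d * ((1/ε) • b)) * (d * ((1/ε) • b)) := by noncomm_ring
    have h1gg : S.le 0 (1 - (c * ((1/ε) • b)) * (c * ((1/ε) • b))) := by
      rw [hgg]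
      rw [id_sq_diff]
      have hcz : (1 - d * ((1/ε) • b))*(1 + d * ((1/ε) • b))
          = (1 + d * ((1/ε) • b))*(1 - d * ((1/ε) • b)) := by
        have : ∀ z : R, (1 - z)*(1 + z) = (1 + z)*(1 - z) := fun z => by noncomm_ring
        exact this _
      exact S.mul_nonneg_comm (S.sub_mem' S.one_mem hzA) (S.add_mem S.one_mem hzA)
        (S.sub_nonneg_of_le hzA S.one_mem hz1)
        (S.add_nonneg' S.one_mem hzA S.one_nonneg hz0) hcz
    have hplus : S.le 0 (1 + c * ((1/ε) • b)) := by
      have e : 1 + c * ((1/ε) • b) = (1/2 : ℝ) •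
          ((1 + c * ((1/ε) • b))*(1 + c * ((1/ε) • b))
            + (1 - (c * ((1/ε) • b)) * (c * ((1/ε) • b)))) := by
        rw [id_plus, half_double]
      rw [e]
      apply S.smul_nonneg _ (by norm_num)
      · exact S.add_mem (S.sq_mem _ (S.add_mem S.one_mem hgA))
          (S.sub_mem' S.one_mem (S.sq_mem _ hgA))
      · exact S.add_nonneg' (S.sq_mem _ (S.add_mem S.one_mem hgA))
          (S.sub_mem' S.one_mem (S.sq_mem _ hgA))
          (S.sq_nonneg _ (S.add_mem S.one_mem hgA)) h1gg
    have hminus : S.le 0 (1 - c * ((1/ε) • b)) := by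
      have e : 1 - c * ((1/ε) • b) = (1/2 : ℝ) •
          ((1 - c * ((1/ε) • b))*(1 - c * ((1/ε) • b))
            + (1 - (c * ((1/ε) • b)) * (c * ((1/ε) • b)))) := by
        rw [id_minus, half_double]
      rw [e]
      apply S.smul_nonneg _ (by norm_num)
      · exact S.add_mem (S.sq_mem _ (S.sub_mem' S.one_mem hgA))
          (S.sub_mem' S.one_mem (S.sq_mem _ hgA))
      · exact S.add_nonneg' (S.sq_mem _ (S.sub_mem' S.one_mem hgA))
          (S.sub_mem' S.one_mem (S.sq_mem _ hgA))
          (S.sq_nonneg _ (S.sub_mem' S.one_mem hgA)) h1gg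
    have hdcg : (d + ε • (1:R)) * (c * ((1/ε) • b)) = c := by
      rw [← mul_assoc, ← hcdε, mul_assoc, hinv1, mul_one]
    have hgdε : (c * ((1/ε) • b)) * (d + ε • (1:R)) = c := by
      rw [mul_assoc, hinv2, mul_one]
    constructor
    · have e : (d + c) + ε • (1:R) = (d + ε • (1:R)) * (1 + c * ((1/ε) • b)) := by
        rw [mul_add, mul_one, hdcg]; abel
      rw [e]
      have c1 : (d + ε • (1:R)) * (1 + c * ((1/ε) • b)) = (d + ε • (1:R)) + c := by
        rw [mul_add, mul_one, hdcg]
      have c2 : (1 + c * ((1/ε) • b)) * (d + ε • (1:R)) = (d + ε • (1:R)) + c := by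
        rw [add_mul, one_mul, hgdε]
      exact S.mul_nonneg_comm hdεA (S.add_mem S.one_mem hgA) hdε0 hplus (by rw [c1, c2])
    · have e : (d - c) + ε • (1:R) = (d + ε • (1:R)) * (1 - c * ((1/ε) • b)) := by
        rw [mul_sub, mul_one, hdcg]; abel
      rw [e]
      have c1 : (d + ε • (1:R)) * (1 - c * ((1/ε) • b)) = (d + ε • (1:R)) - c := by
        rw [mul_sub, mul_one, hdcg]
      have c2 : (1 - c * ((1/ε) • b)) * (d + ε • (1:R)) = (d + ε • (1:R)) - c := by
        rw [sub_mul, one_mul, hgdε]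
      exact S.mul_nonneg_comm hdεA (S.sub_mem' S.one_mem hgA) hdε0 hminus (by rw [c1, c2])
  constructor
  · exact S.nonneg_of_forall_eps (S.add_mem hd hc) (fun ε hε => (key ε hε).1)
  · exact S.nonneg_of_forall_eps (S.sub_mem' hd hc) (fun ε hε => (key ε hε).2)

lemma posPart {c : R} (hc : c ∈ S.A) :
    ∃ u v : R, u ∈ S.A ∧ v ∈ S.A ∧ S.le 0 u ∧ S.le 0 v ∧ c = u - v ∧ u*v = 0 ∧ v*u = 0 := by
  obtain ⟨d, hdA, hd0, hdd, hdcomm⟩ := S.sqrt (S.sq_mem c hc) (S.sq_nonneg c hc)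
  have hdc : d*c = c*d := hdcomm c hc (by rw [mul_assoc])
  obtain ⟨hplus, hminus⟩ := S.abs_ge hc hdA hd0 hdd hdc
  refine ⟨(1/2 : ℝ) • (d + c), (1/2 : ℝ) • (d - c),
    S.smul_mem _ (S.add_mem hdA hc), S.smul_mem _ (S.sub_mem' hdA hc),
    S.smul_nonneg _ (by norm_num) _ (S.add_mem hdA hc) hplus,
    S.smul_nonneg _ (by norm_num) _ (S.sub_mem' hdA hc) hminus, ?_, ?_, ?_⟩
  · rw [← smul_sub]
    have e : (d + c) - (d - c) = c + c := by abel
    rw [e, half_double]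
  · rw [smul_mul_assoc, mul_smul_comm, smul_smul]
    have e : (d+c)*(d-c) = d*d - d*c + c*d - c*c := by noncomm_ring
    rw [e, hdd, hdc]
    simp
  · rw [smul_mul_assoc, mul_smul_comm, smul_smul]
    have e : (d-c)*(d+c) = d*d + d*c - c*d - c*c := by noncomm_ring
    rw [e, hdd, hdc]
    simp

end SynapticAlgebra
namespace SynapticAlgebra

variable {R : Type*} [Ring R] [Algebra ℝ R] (S : SynapticAlgebra R)

lemma halving {x : R} (hx : x ∈ S.A) (t : ℝ) (h0 : S.le 0 x) (h1 : S.le x (t • (1:R))) :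
    ∃ e ∈ S.Proj, S.le 0 (x - (t/2) • e) ∧ S.le (x - (t/2) • e) ((t/2) • (1:R)) := by
  obtain ⟨u, v, huA, hvA, hu0, hv0, hcuv, huv, hvu⟩ :=
    S.posPart (S.sub_mem' hx (S.smul_one_mem (t/2)))
  obtain ⟨e, he, hiff, hue, heu⟩ := S.carrier huA hu0
  have heA : e ∈ S.A := he.1
  have hev : e * v = 0 := (hiff v hvA).mp huv
  have hve : v * e = 0 :=
    (S.SA4 e heA v hvA hv0 (by rw [hev, zero_mul] : (e*v)*e = 0)).2
  have hce : (x - (t/2) • (1:R)) * e = u := by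
    rw [hcuv, sub_mul, hue, hve, sub_zero]
  have hec : e * (x - (t/2) • (1:R)) = u := by
    rw [hcuv, mul_sub, heu, hev, sub_zero]
  have hsplit : (x - (t/2) • (1:R)) + (t/2) • (1:R) = x := by abel
  have hxe : x * e = u + (t/2) • e := by
    have : x * e = (x - (t/2) • (1:R)) * e + ((t/2) • (1:R)) * e := by
      rw [← add_mul, hsplit]
    rw [this, hce, smul_mul_assoc, one_mul]
  have hexx : e * x = u + (t/2) • e := by
    have : e * x = e * (x - (t/2) • (1:R)) + e * ((t/2) • (1:R)) := by
      rw [← mul_add, hsplit]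
    rw [this, hec, mul_smul_comm, mul_one]
  have hcomm : x * e = e * x := by rw [hxe, hexx]
  have hcompl_comm : x * (1 - e) = (1 - e) * x := by
    rw [mul_sub, sub_mul, mul_one, one_mul, hcomm]
  have hx1eA : x * (1 - e) ∈ S.A := S.comm_mul_mem hx (S.sub_mem' S.one_mem heA) hcompl_comm
  have hx1e0 : S.le 0 (x * (1 - e)) := by
    have key : (1-e) * x * (1-e) = x * (1-e) := by
      rw [← hcompl_comm, mul_assoc, (S.compl_proj he).2]
    rw [← key]
    exact S.SA3 (1-e) (S.sub_mem' S.one_mem heA) x hx (S.proj_nonneg (S.compl_proj he)) h0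
  refine ⟨e, he, ?_, ?_⟩
  · have heq : x - (t/2) • e = u + x * (1 - e) := by
      rw [mul_sub, mul_one, hxe]; abel
    rw [heq]
    exact S.add_nonneg' huA hx1eA hu0 hx1e0
  · have hwA : t • (1:R) - x ∈ S.A := S.sub_mem' (S.smul_one_mem t) hx
    have hw0 : S.le 0 (t • (1:R) - x) := S.sub_nonneg_of_le hx (S.smul_one_mem t) h1
    have hew : e * (t • (1:R) - x) = t • e - (u + (t/2) • e) := by
      rw [mul_sub, mul_smul_comm, mul_one, hexx]
    have hewe : e * (t • (1:R) - x) * e = t • e - (u + (t/2) • e) := by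
      rw [hew, sub_mul, add_mul, smul_mul_assoc, smul_mul_assoc, he.2, hue]
    have hu_eq : u = x - (t/2) • (1:R) + v := by rw [hcuv]; abel
    have hz : (t/2) • (1:R) - (x - (t/2) • e) = e * (t • (1:R) - x) * e + v := by
      rw [hewe, hu_eq]
      match_scalars <;> ring
    apply S.le_of_sub_nonneg (S.sub_mem' hx (S.smul_mem _ heA)) (S.smul_one_mem _)
    rw [hz]
    exact S.add_nonneg' (S.quad_mem heA hwA) hvA
      (S.SA3 e heA _ hwA (S.proj_nonneg he) hw0) hv0

end SynapticAlgebra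
namespace SynapticAlgebra

variable {R : Type*} [Ring R] [Algebra ℝ R] (S : SynapticAlgebra R)

lemma span_comm {b : R} (hb : ∀ p ∈ S.Proj, p * b = b * p) {x : R}
    (hx : x ∈ Submodule.span ℝ S.Proj) : x * b = b * x := by
  induction hx using Submodule.span_induction with
  | mem p hp => exact hb p hp
  | zero => simp
  | add x y _ _ h1 h2 => rw [add_mul, mul_add, h1, h2]
  | smul r x _ h => rw [smul_mul_assoc, mul_smul_comm, h]

lemma span_comm_span (hPP : ∀ p ∈ S.Proj, ∀ q ∈ S.Proj, p * q = q * p) {x y : R}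
    (hx : x ∈ Submodule.span ℝ S.Proj) (hy : y ∈ Submodule.span ℝ S.Proj) :
    x * y = y * x := by
  apply S.span_comm _ hx
  intro p hp
  exact (S.span_comm (fun q hq => hPP q hq p hp) hy).symm

/-- Invariant for the dyadic approximation sequence. -/
def Good (a : R) (n : ℕ) (y : R) : Prop :=
  y ∈ S.A ∧ S.le 0 y ∧ S.le y (((1/2:ℝ)^n) • (1:R)) ∧ (a - y) ∈ Submodule.span ℝ S.Proj

lemma good_step {a : R} {n : ℕ} {y : R} (hy : S.Good a n y) :
    ∃ y', S.Good a (n+1) y' ∧ S.le 0 (y - y') ∧ y - y' ∈ Submodule.span ℝ S.Proj := by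
  obtain ⟨hyA, hy0, hy1, hyspan⟩ := hy
  obtain ⟨e, he, h0, h1⟩ := S.halving hyA ((1/2:ℝ)^n) hy0 hy1
  have hpow : ((1/2:ℝ)^n)/2 = (1/2:ℝ)^(n+1) := by rw [pow_succ]; ring
  refine ⟨y - (((1/2:ℝ)^n)/2) • e, ⟨S.sub_mem' hyA (S.smul_mem _ he.1), h0, by rw [← hpow]; exact h1, ?_⟩, ?_, ?_⟩
  · have : a - (y - (((1/2:ℝ)^n)/2) • e) = (a - y) + (((1/2:ℝ)^n)/2) • e := by abel
    rw [this]
    exact Submodule.add_mem _ hyspan (Submodule.smul_mem _ _ (Submodule.subset_span he))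
  · have : y - (y - (((1/2:ℝ)^n)/2) • e) = (((1/2:ℝ)^n)/2) • e := by abel
    rw [this]
    exact S.smul_nonneg _ (by positivity) e he.1 (S.proj_nonneg he)
  · have : y - (y - (((1/2:ℝ)^n)/2) • e) = (((1/2:ℝ)^n)/2) • e := by abel
    rw [this]
    exact Submodule.smul_mem _ _ (Submodule.subset_span he)

/-- The dyadic approximation sequence of residuals. -/
noncomputable def dySeq (a : R) (h0 : S.Good a 0 a) : (n : ℕ) → {y : R // S.Good a n y}
  | 0 => ⟨a, h0⟩
  | n+1 => ⟨Classical.choose (S.good_step (dySeq a h0 n).2),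
      (Classical.choose_spec (S.good_step (dySeq a h0 n).2)).1⟩

lemma dySeq_step (a : R) (h0 : S.Good a 0 a) (n : ℕ) :
    S.le 0 ((S.dySeq a h0 n).1 - (S.dySeq a h0 (n+1)).1) := by
  have := (Classical.choose_spec (S.good_step (S.dySeq a h0 n).2)).2.1
  simpa [dySeq] using this

lemma comm_of_proj_comm (hPP : ∀ p ∈ S.Proj, ∀ q ∈ S.Proj, p * q = q * p)
    {b : R} (hb : b ∈ S.A) (hpb : ∀ p ∈ S.Proj, p * b = b * p) :
    ∀ a ∈ S.A, a * b = b * a := by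
  intro a ha
  obtain ⟨r1, hr1⟩ := S.orderUnit a ha
  obtain ⟨r2, hr2⟩ := S.orderUnit (-a) (S.neg_mem ha)
  set M : ℝ := max (r1 + r2) 1 with hM
  have hM1 : (1:ℝ) ≤ M := le_max_right _ _
  have hM0 : (0:ℝ) < M := by linarith
  set a' : R := M⁻¹ • (a + r2 • (1:R)) with ha'
  have haux : a + r2 • (1:R) ∈ S.A := S.add_mem ha (S.smul_one_mem r2)
  have ha'A : a' ∈ S.A := S.smul_mem _ haux
  have haux0 : S.le 0 (a + r2 • (1:R)) := by
    apply S.le_shift (S.neg_mem ha) (S.smul_one_mem r2) S.zero_mem haux hr2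
    abel
  have ha'0 : S.le 0 a' := S.smul_nonneg _ (by positivity) _ haux haux0
  have ha'1 : S.le a' (((1/2:ℝ)^0) • (1:R)) := by
    simp only [pow_zero]
    have haux1 : S.le (a + r2 • (1:R)) (M • (1:R)) := by
      have step1 : S.le (a + r2 • (1:R)) ((r1 + r2) • (1:R)) := by
        apply S.le_shift ha (S.smul_one_mem r1) haux (S.smul_one_mem (r1+r2)) hr1
        rw [add_smul]; abel
      exact S.le_trans _ haux _ (S.smul_one_mem _) _ (S.smul_one_mem _) step1
        (S.smul_one_mono (le_max_left _ _))
    have := S.smul_nonneg M⁻¹ (by positivity) _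
      (S.sub_mem' (S.smul_one_mem M) haux)
      (S.sub_nonneg_of_le haux (S.smul_one_mem M) haux1)
    apply S.le_of_sub_nonneg ha'A (S.smul_one_mem 1)
    have e : (1:ℝ) • (1:R) - a' = M⁻¹ • (M • (1:R) - (a + r2 • (1:R))) := by
      rw [ha', smul_sub, smul_smul, inv_mul_cancel₀ hM0.ne']
    rwa [e]
  have hGood : S.Good a' 0 a' := ⟨ha'A, ha'0, ha'1, by simp⟩
  -- apply SA8 with f n = a' - residual n
  have key : a' * b = b * a' := by
    apply S.SA8 a' ha'A b hb (fun n => a' - (S.dySeq a' hGood n).1)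
    · intro n; exact S.sub_mem' ha'A (S.dySeq a' hGood n).2.1
    · intro n; exact S.span_comm hpb (S.dySeq a' hGood n).2.2.2.2
    · intro n m
      exact S.span_comm_span hPP (S.dySeq a' hGood n).2.2.2.2 (S.dySeq a' hGood m).2.2.2.2
    · intro n
      apply S.le_shift S.zero_mem
        (S.sub_mem' (S.dySeq a' hGood n).2.1 (S.dySeq a' hGood (n+1)).2.1)
        (S.sub_mem' ha'A (S.dySeq a' hGood n).2.1)
        (S.sub_mem' ha'A (S.dySeq a' hGood (n+1)).2.1)
        (S.dySeq_step a' hGood n)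
      abel
    · intro ε hε
      obtain ⟨N, hN⟩ := exists_pow_lt_of_lt_one hε (by norm_num : (1/2:ℝ) < 1)
      refine ⟨N, fun n hn => ?_⟩
      have e : a' - (a' - (S.dySeq a' hGood n).1) = (S.dySeq a' hGood n).1 := by abel
      rw [e]
      have h2n : ((1/2:ℝ)^n) ≤ (1/2:ℝ)^N :=
        pow_le_pow_of_le_one (by norm_num) (by norm_num) hn
      constructor
      · exact S.le_trans _ (S.dySeq a' hGood n).2.1 _ (S.smul_one_mem _) _ (S.smul_one_mem _)
          (S.dySeq a' hGood n).2.2.2.1 (S.smul_one_mono (by linarith))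
      · have : S.le ((-ε) • (1:R)) 0 := by
          have := S.smul_one_mono (by linarith : -ε ≤ 0)
          simpa using this
        exact S.le_trans _ (S.smul_one_mem _) _ S.zero_mem _ (S.dySeq a' hGood n).2.1 this
          (S.dySeq a' hGood n).2.2.1
  -- unnormalize
  have expand : ∀ c : R, a' * c = M⁻¹ • (a * c + r2 • c) := by
    intro c
    rw [ha', smul_mul_assoc, add_mul, smul_mul_assoc, one_mul]
  have expand' : ∀ c : R, c * a' = M⁻¹ • (c * a + r2 • c) := by
    intro c
    rw [ha', mul_smul_comm, mul_add, mul_smul_comm, mul_one]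
  rw [expand b, expand' b] at key
  have hkey2 := congrArg (fun z => M • z) key
  simp only [smul_smul, mul_inv_cancel₀ hM0.ne', one_smul] at hkey2
  exact add_right_cancel hkey2

end SynapticAlgebra
namespace SynapticAlgebra

variable {R : Type*} [Ring R] [Algebra ℝ R] (S : SynapticAlgebra R)

lemma compl_le {x y : R} (hx : x ∈ S.A) (hy : y ∈ S.A) (h : S.le x y) :
    S.le (1-y) (1-x) :=
  S.le_shift hx hy (S.sub_mem' S.one_mem hy) (S.sub_mem' S.one_mem hx) h (by abel)

/-- Existence of meets in the projection lattice, via carrier projections. -/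
lemma meet_exists {p q : R} (hp : p ∈ S.Proj) (hq : q ∈ S.Proj) :
    ∃ m, S.IsMeet p q m ∧ m * q = m ∧ q * m = m ∧ m * p = m ∧ p * m = m := by
  have haA : p - p*q*p ∈ S.A := S.sub_mem' hp.1 (S.quad_mem hp.1 hq.1)
  have ha_eq : p*(1-q)*p = p - p*q*p := by
    have e : p*(1-q)*p = p*p - p*q*p := by noncomm_ring
    rw [e, hp.2]
  have ha0 : S.le 0 (p - p*q*p) := by
    rw [← ha_eq]
    exact S.SA3 p hp.1 (1-q) (S.sub_mem' S.one_mem hq.1) (S.proj_nonneg hp)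
      (S.proj_nonneg (S.compl_proj hq))
  obtain ⟨e, he, hiff, hae, hea⟩ := S.carrier haA ha0
  have heA : e ∈ S.A := he.1
  have hap : (p - p*q*p) * p = p - p*q*p := by
    rw [sub_mul, mul_assoc, mul_assoc, hp.2, ← mul_assoc]
  have ha1p : (p - p*q*p) * (1 - p) = 0 := by
    rw [mul_sub, mul_one, hap, sub_self]
  have he1p : e * (1-p) = 0 := (hiff (1-p) (S.sub_mem' S.one_mem hp.1)).mp ha1p
  have hep : e * p = e := by
    have t := he1p; rw [mul_sub, mul_one, sub_eq_zero] at t; exact t.symm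
  have h1pe : (1-p) * e = 0 :=
    (S.SA4 (1-p) (S.sub_mem' S.one_mem hp.1) e heA (S.proj_nonneg he)
      (by rw [mul_assoc, he1p, mul_zero])).1
  have hpe : p * e = e := by
    have t := h1pe; rw [sub_mul, one_mul, sub_eq_zero] at t; exact t.symm
  have hm_idem : (p-e)*(p-e) = p - e := by
    have ex : (p-e)*(p-e) = p*p - p*e - e*p + e*e := by noncomm_ring
    rw [ex, hp.2, hpe, hep, he.2]; abel
  have hmProj : (p-e) ∈ S.Proj := ⟨S.sub_mem' hp.1 heA, hm_idem⟩
  have hmp : (p-e)*p = p-e := by rw [sub_mul, hp.2, hep]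
  have hpm : p*(p-e) = p-e := by rw [mul_sub, hp.2, hpe]
  have hlemp : S.le (p-e) p := S.proj_le_of_mul hmProj hp hmp hpm
  -- m ≤ q
  have ham : (p - p*q*p)*(p-e) = 0 := by
    rw [mul_sub, hap, hae, sub_self]
  have hm1qm : (p-e)*(1-q)*(p-e) = 0 := by
    calc (p-e)*(1-q)*(p-e) = ((p-e)*p)*(1-q)*(p*(p-e)) := by rw [hmp, hpm]
    _ = (p-e)*((p*(1-q)*p)*(p-e)) := by noncomm_ring
    _ = (p-e)*((p - p*q*p)*(p-e)) := by rw [ha_eq]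
    _ = 0 := by rw [ham, mul_zero]
  have h4 := S.SA4 (p-e) hmProj.1 (1-q) (S.sub_mem' S.one_mem hq.1)
    (S.proj_nonneg (S.compl_proj hq)) hm1qm
  have hmq : (p-e)*q = p-e := by
    have t := h4.1; rw [mul_sub, mul_one, sub_eq_zero] at t; exact t.symm
  have hqm : q*(p-e) = p-e := by
    have t := h4.2; rw [sub_mul, one_mul, sub_eq_zero] at t; exact t.symm
  have hlemq : S.le (p-e) q := S.proj_le_of_mul hmProj hq hmq hqm
  refine ⟨p - e, ⟨hmProj, hlemp, hlemq, ?_⟩, hmq, hqm, hmp, hpm⟩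
  intro r hr hrp hrq
  obtain ⟨hrp1, hrp2⟩ := S.mul_of_proj_le hr hp hrp
  obtain ⟨hrq1, hrq2⟩ := S.mul_of_proj_le hr hq hrq
  have har : (p - p*q*p)*r = 0 := by
    have e1 : p*q*p*r = r := by rw [mul_assoc, hrp2, mul_assoc, hrq2, hrp2]
    rw [sub_mul, hrp2, e1, sub_self]
  have her : e*r = 0 := (hiff r hr.1).mp har
  have hre : r*e = 0 :=
    (S.SA4 r hr.1 e heA (S.proj_nonneg he) (by rw [mul_assoc, her, mul_zero])).1
  apply S.proj_le_of_mul hr hmProj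
  · rw [mul_sub, hrp1, hre, sub_zero]
  · rw [sub_mul, hrp2, her, sub_zero]

lemma join_orth {p q : R} (hp : p ∈ S.Proj) (hq : q ∈ S.Proj)
    (hpq : p*q = 0) (hqp : q*p = 0) : S.IsJoin p q (p+q) := by
  have hsum : (p+q) ∈ S.Proj := by
    refine ⟨S.add_mem hp.1 hq.1, ?_⟩
    have e : (p+q)*(p+q) = p*p + p*q + q*p + q*q := by noncomm_ring
    rw [e, hp.2, hq.2, hpq, hqp]; abel
  refine ⟨hsum, ?_, ?_, ?_⟩
  · exact S.proj_le_of_mul hp hsum (by rw [mul_add, hp.2, hpq, add_zero])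
      (by rw [add_mul, hp.2, hqp, add_zero])
  · exact S.proj_le_of_mul hq hsum (by rw [mul_add, hq.2, hqp, zero_add])
      (by rw [add_mul, hq.2, hpq, zero_add])
  · intro r hr hpr hqr
    obtain ⟨hpr1, hpr2⟩ := S.mul_of_proj_le hp hr hpr
    obtain ⟨hqr1, hqr2⟩ := S.mul_of_proj_le hq hr hqr
    exact S.proj_le_of_mul hsum hr (by rw [add_mul, hpr1, hqr1])
      (by rw [mul_add, hpr2, hqr2])

lemma join_compl {q : R} (hq : q ∈ S.Proj) : S.IsJoin q (1-q) 1 := by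
  refine ⟨S.one_proj, S.proj_le_one hq, S.proj_le_one (S.compl_proj hq), ?_⟩
  intro r hr h1 h2
  obtain ⟨hq1, _⟩ := S.mul_of_proj_le hq hr h1
  obtain ⟨hq2, _⟩ := S.mul_of_proj_le (S.compl_proj hq) hr h2
  have hr1 : r = 1 := by
    have e : r = q*r + (1-q)*r := by noncomm_ring
    rw [e, hq1, hq2]; abel
  rw [hr1]
  exact S.le_refl 1 S.one_mem

lemma meet_one {p : R} (hp : p ∈ S.Proj) : S.IsMeet p 1 p :=
  ⟨hp, S.le_refl p hp.1, S.proj_le_one hp, fun r _ h1 _ => h1⟩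

lemma proj_comm_of_distrib
    (hD : ∀ p ∈ S.Proj, ∀ q ∈ S.Proj, ∀ r ∈ S.Proj,
      ∀ j₁ m₁ m₂ m₃ j₂ : R,
        S.IsJoin q r j₁ → S.IsMeet p j₁ m₁ →
        S.IsMeet p q m₂ → S.IsMeet p r m₃ →
        S.IsJoin m₂ m₃ j₂ → m₁ = j₂) :
    ∀ p ∈ S.Proj, ∀ q ∈ S.Proj, p * q = q * p := by
  intro p hp q hq
  obtain ⟨m2, hm2, hm2q, hqm2, hm2p, hpm2⟩ := S.meet_exists hp hq
  obtain ⟨m3, hm3, hm3q', hq'm3, hm3p, hpm3⟩ := S.meet_exists hp (S.compl_proj hq)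
  have hm3q : m3*q = 0 := by
    have t := hm3q'; rw [mul_sub, mul_one] at t
    exact sub_eq_self.mp t
  have hqm3 : q*m3 = 0 := by
    have t := hq'm3; rw [sub_mul, one_mul] at t
    exact sub_eq_self.mp t
  have ho1 : m2*m3 = 0 := by rw [← hm2q, mul_assoc, hqm3, mul_zero]
  have ho2 : m3*m2 = 0 := by rw [← hqm2, ← mul_assoc, hm3q, zero_mul]
  have hside := hD p hp q hq (1-q) (S.compl_proj hq) 1 p m2 m3 (m2+m3)
    (S.join_compl hq) (S.meet_one hp) hm2 hm3 (S.join_orth hm2.1 hm3.1 ho1 ho2)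
  calc p*q = (m2+m3)*q := by rw [← hside]
  _ = m2 := by rw [add_mul, hm2q, hm3q, add_zero]
  _ = q*(m2+m3) := by rw [mul_add, hqm2, hqm3, add_zero]
  _ = q*p := by rw [← hside]

end SynapticAlgebra
namespace SynapticAlgebra

variable {R : Type*} [Ring R] [Algebra ℝ R] (S : SynapticAlgebra R)

lemma meet_of_comm {p q : R} (hp : p ∈ S.Proj) (hq : q ∈ S.Proj) (h : p*q = q*p) :
    S.IsMeet p q (p*q) := by
  have hpqA : p*q ∈ S.A := S.comm_mul_mem hp.1 hq.1 h
  have idem : (p*q)*(p*q) = p*q := by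
    calc (p*q)*(p*q) = p*(q*p)*q := by noncomm_ring
    _ = p*(p*q)*q := by rw [← h]
    _ = (p*p)*(q*q) := by noncomm_ring
    _ = p*q := by rw [hp.2, hq.2]
  have hProj : p*q ∈ S.Proj := ⟨hpqA, idem⟩
  refine ⟨hProj, ?_, ?_, ?_⟩
  · exact S.proj_le_of_mul hProj hp
      (by rw [mul_assoc, ← h, ← mul_assoc, hp.2]) (by rw [← mul_assoc, hp.2])
  · exact S.proj_le_of_mul hProj hq
      (by rw [mul_assoc, hq.2]) (by rw [← mul_assoc, ← h, mul_assoc, hq.2])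
  · intro r hr hrp hrq
    obtain ⟨hrp1, hrp2⟩ := S.mul_of_proj_le hr hp hrp
    obtain ⟨hrq1, hrq2⟩ := S.mul_of_proj_le hr hq hrq
    exact S.proj_le_of_mul hr hProj (by rw [← mul_assoc, hrp1, hrq1])
      (by rw [mul_assoc, hrq2, hrp2])

lemma join_of_comm {p q : R} (hp : p ∈ S.Proj) (hq : q ∈ S.Proj) (h : p*q = q*p) :
    S.IsJoin p q (p + q - p*q) := by
  have h' : (1-p)*(1-q) = (1-q)*(1-p) := by
    have e1 : (1-p)*(1-q) = 1 - p - q + p*q := by noncomm_ring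
    have e2 : (1-q)*(1-p) = 1 - q - p + q*p := by noncomm_ring
    rw [e1, e2, h]; abel
  have hm := S.meet_of_comm (S.compl_proj hp) (S.compl_proj hq) h'
  have ej : 1 - (1-p)*(1-q) = p + q - p*q := by
    have e : (1-p)*(1-q) = 1 - p - q + p*q := by noncomm_ring
    rw [e]; abel
  have jProj : p + q - p*q ∈ S.Proj := by rw [← ej]; exact S.compl_proj hm.1
  refine ⟨jProj, ?_, ?_, ?_⟩
  · have := S.compl_le hm.1.1 (S.compl_proj hp).1 hm.2.1
    rwa [sub_sub_cancel, ej] at this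
  · have := S.compl_le hm.1.1 (S.compl_proj hq).1 hm.2.2.1
    rwa [sub_sub_cancel, ej] at this
  · intro r hr hpr hqr
    have h1 := S.compl_le hp.1 hr.1 hpr
    have h2 := S.compl_le hq.1 hr.1 hqr
    have h3 := hm.2.2.2 (1-r) (S.compl_proj hr) h1 h2
    have := S.compl_le (S.compl_proj hr).1 hm.1.1 h3
    rwa [sub_sub_cancel, ej] at this

lemma meet_unique {p q m m' : R} (h1 : S.IsMeet p q m) (h2 : S.IsMeet p q m') : m = m' :=
  S.le_antisymm m h1.1.1 m' h2.1.1
    (h2.2.2.2 m h1.1 h1.2.1 h1.2.2.1)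
    (h1.2.2.2 m' h2.1 h2.2.1 h2.2.2.1)

lemma join_unique {p q j j' : R} (h1 : S.IsJoin p q j) (h2 : S.IsJoin p q j') : j = j' :=
  S.le_antisymm j h1.1.1 j' h2.1.1
    (h1.2.2.2 j' h2.1 h2.2.1 h2.2.2.1)
    (h2.2.2.2 j h1.1 h1.2.1 h1.2.2.1)

end SynapticAlgebra


/-- Theorem 4.5: a synaptic algebra `A` is commutative iff its projection
lattice `P` is a Boolean algebra, i.e. iff the lattice `P` is distributive
(`P` being automatically a bounded complemented lattice). Distributivity
`p ∧ (q ∨ r) = (p ∧ q) ∨ (p ∧ r)` is expressed via the meet/join predicates. -/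
theorem stmt3 {R : Type*} [Ring R] [Algebra ℝ R] (S : SynapticAlgebra R) :
    (∀ a ∈ S.A, ∀ b ∈ S.A, a * b = b * a) ↔
    (∀ p ∈ S.Proj, ∀ q ∈ S.Proj, ∀ r ∈ S.Proj,
      ∀ j₁ m₁ m₂ m₃ j₂ : R,
        S.IsJoin q r j₁ → S.IsMeet p j₁ m₁ →
        S.IsMeet p q m₂ → S.IsMeet p r m₃ →
        S.IsJoin m₂ m₃ j₂ → m₁ = j₂) := by
  constructor
  · intro hcomm p hp q hq r hr j1 m1 m2 m3 j2 hj1 hm1 hm2 hm3 hj2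
    have cpq := hcomm p hp.1 q hq.1
    have cpr := hcomm p hp.1 r hr.1
    have cqr := hcomm q hq.1 r hr.1
    have hj1' := S.join_of_comm hq hr cqr
    have ej1 : j1 = q + r - q*r := S.join_unique hj1 hj1'
    have em2 : m2 = p*q := S.meet_unique hm2 (S.meet_of_comm hp hq cpq)
    have em3 : m3 = p*r := S.meet_unique hm3 (S.meet_of_comm hp hr cpr)
    have hj1Proj : (q + r - q*r) ∈ S.Proj := hj1'.1
    rw [ej1] at hm1
    have em1 : m1 = p*(q + r - q*r) :=
      S.meet_unique hm1 (S.meet_of_comm hp hj1Proj (hcomm p hp.1 _ hj1Proj.1))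
    have cm23 : m2*m3 = m3*m2 := hcomm m2 hm2.1.1 m3 hm3.1.1
    have ej2 : j2 = m2 + m3 - m2*m3 := S.join_unique hj2 (S.join_of_comm hm2.1 hm3.1 cm23)
    rw [em1, ej2, em2, em3]
    have key : (p*q)*(p*r) = p*(q*r) := by
      calc (p*q)*(p*r) = p*((q*p)*r) := by noncomm_ring
      _ = p*((p*q)*r) := by rw [← cpq]
      _ = (p*p)*(q*r) := by noncomm_ring
      _ = p*(q*r) := by rw [hp.2]
    rw [key, mul_sub, mul_add]
  · intro hD a ha b hb
    have hPP := S.proj_comm_of_distrib hD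
    have step1 : ∀ c ∈ S.A, ∀ p ∈ S.Proj, c * p = p * c := by
      intro c hc p hp
      exact S.comm_of_proj_comm hPP hp.1 (fun q hq => hPP q hq p hp) c hc
    exact S.comm_of_proj_comm hPP hb (fun p hp => (step1 b hb p hp).symm) a ha
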